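/- Assume Dickson's conjecture (D). For every n ∈ ℕ and every subset s ⊆ {0, 1, ..., n−1}, there exist natural numbers a ≥ 1 and b such that for all t < n, the number a·t + b is prime if and only if t ∈ s. -/

import Mathlib

/-!
Choose distinct primes `p t > n` for the positions `t ∉ s` and, by the Chinese remainder theorem,
an offset `B ≡ 1 (mod n!)` with `p t ∣ B + n! * t`. Put `A = n! * ∏ p t`. For `m ≥ 2` the term
`n! * t + (A * m + B)` with `t ∉ s` is a proper multiple of `p t`. The forms `A * x + B + n! * t`,
`t ∈ s`, have no fixed prime divisor: a prime dividing `A` divides none of the `B + n! * t`, and any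
other prime exceeds `n`, so some residue avoids the at most `n` roots. Dickson's conjecture then
supplies an `m` making all of them prime.
-/

open Finset
open scoped Nat

def DicksonConjecture : Prop :=
  ∀ (k : ℕ) (a b : ℕ → ℤ), (∀ i < k, 1 ≤ a i) →
    (¬ ∃ n : ℤ, 1 < n ∧ ∀ s : ℤ, n ∣ ∏ i ∈ Finset.range k, (a i * s + b i)) →
    {m : ℕ | ∀ i < k, Prime (a i * m + b i)}.Infinite

theorem exists_forall_mul_add_ne_zero {K ι : Type*} [Field K] [Fintype K] (s : Finset ι)
    (a b : ι → K) (ha : ∀ i ∈ s, a i ≠ 0) (hs : #s < Fintype.card K) :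
    ∃ x, ∀ i ∈ s, a i * x + b i ≠ 0 := by
  classical
  obtain ⟨x, -, hx⟩ := exists_mem_notMem_of_card_lt_card
    ((Finset.card_image_le (s := s) (f := fun i => -b i / a i)).trans_lt hs)
  refine ⟨x, fun i hi hroot => hx (mem_image.mpr ⟨i, hi, ?_⟩)⟩
  field_simp [ha i hi]
  linear_combination -hroot

theorem not_exists_one_lt_forall_dvd {f : ℤ → ℤ}
    (h : ∀ q : ℕ, q.Prime → ∃ x, ¬ (q : ℤ) ∣ f x) : ¬ ∃ n : ℤ, 1 < n ∧ ∀ x, n ∣ f x := by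
  rintro ⟨n, hn, hdvd⟩
  have hq : n.natAbs.minFac.Prime := Nat.minFac_prime (by omega)
  obtain ⟨x, hx⟩ := h _ hq
  exact hx ((Int.natCast_dvd.mpr (Nat.minFac_dvd _)).trans (hdvd x))

theorem DicksonConjecture.infinite_setOf_forall_mem_prime (hD : DicksonConjecture)
    (s : Finset ℕ) (a b : ℕ → ℤ) (ha : ∀ i ∈ s, 1 ≤ a i)
    (hloc : ∀ q : ℕ, q.Prime → ∃ x : ZMod q, ∀ i ∈ s, (a i : ZMod q) * x + b i ≠ 0) :
    {m : ℕ | ∀ i ∈ s, Prime (a i * m + b i)}.Infinite := by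
  classical
  rcases s.eq_empty_or_nonempty with rfl | ⟨e, he⟩
  · simpa using Set.infinite_univ
  -- pad the family to `range N` by repeating its member `e`
  set σ : ℕ → ℕ := fun i => if i ∈ s then i else e
  have hσ : ∀ i, σ i ∈ s := fun i => by by_cases hi : i ∈ s <;> simp [σ, hi, he]
  set N := (s.sup id).succ
  refine (hD N (a ∘ σ) (b ∘ σ) (fun i _ => ha _ (hσ i)) ?_).mono fun m hm i hi => ?_
  · refine not_exists_one_lt_forall_dvd fun q hq => ?_
    obtain ⟨x, hx⟩ := hloc q hq
    refine ⟨x.cast, fun hdvd => ?_⟩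
    obtain ⟨i, -, hi⟩ := (Nat.prime_iff_prime_int.mp hq).exists_mem_finset_dvd hdvd
    apply hx _ (hσ i)
    simpa [ZMod.intCast_zmod_cast] using (ZMod.intCast_zmod_eq_zero_iff_dvd _ q).mpr hi
  · simpa [σ, hi] using hm i (mem_range.mp (subset_range_sup_succ s hi))

theorem exists_injective_prime_gt (n : ℕ) :
    ∃ p : ℕ → ℕ, Function.Injective p ∧ ∀ t, (p t).Prime ∧ n < p t :=
  ⟨fun t => Nat.nth Nat.Prime (n + t),
    (Nat.nth_strictMono Nat.infinite_setOfPred_prime).injective.comp (add_right_injective n),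
    fun t => ⟨Nat.prime_nth_prime _,
      by have := Nat.add_two_le_nth_prime (n + t); dsimp only; omega⟩⟩

section PrescribedPattern

variable {n B : ℕ} {s : Finset ℕ} {p : ℕ → ℕ}

/-- The residue `(p t - 1) * n! * t` is `-n! * t` modulo `p t`, so no inverse is needed. -/
theorem exists_modEq_one_and_dvd_add (F : Finset ℕ) (hp_inj : Function.Injective p)
    (hp : ∀ t, (p t).Prime ∧ n < p t) :
    ∃ B : ℕ, B ≡ 1 [MOD n !] ∧ ∀ t ∈ F, p t ∣ B + n ! * t := by
  obtain ⟨B₀, hB₀⟩ := Nat.chineseRemainderOfFinset (fun t => (p t - 1) * n ! * t) p F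
    (fun t _ => (hp t).1.ne_zero)
    (fun t _ t' _ h => (Nat.coprime_primes (hp t).1 (hp t').1).mpr (hp_inj.ne h))
  have hcop : Nat.Coprime n ! (∏ t ∈ F, p t) :=
    Nat.Coprime.prod_right fun t _ => ((hp t).1.coprime_factorial_of_lt (hp t).2).symm
  obtain ⟨B, hB1, hBB₀⟩ := Nat.chineseRemainder hcop 1 B₀
  refine ⟨B, hB1, fun t ht => ?_⟩
  have hB : B ≡ (p t - 1) * n ! * t [MOD p t] :=
    (hBB₀.of_dvd (dvd_prod_of_mem p ht)).trans (hB₀ t ht)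
  have hsum : (p t - 1) * n ! * t + n ! * t = p t * (n ! * t) := by
    have := (hp t).1.one_le
    zify [this]
    ring
  refine Nat.modEq_zero_iff_dvd.mp ?_
  calc B + n ! * t ≡ (p t - 1) * n ! * t + n ! * t [MOD p t] := hB.add_right _
    _ = p t * (n ! * t) := hsum
    _ ≡ 0 [MOD p t] := Nat.modEq_zero_iff_dvd.mpr (dvd_mul_right _ _)

/-- Either `q ≤ n`, and then `B + n! * t'` is `1` modulo `q`, or `q = p t` for some `t ∉ s`, and
then `B + n! * t'` is `n! * (t' - t)` modulo `q`, which is nonzero as `|t' - t| < n < q`. -/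
theorem not_dvd_add_of_dvd_factorial_mul_prod (hs : s ⊆ range n)
    (hp : ∀ t, (p t).Prime ∧ n < p t) (hB1 : B ≡ 1 [MOD n !])
    (hBp : ∀ t ∈ range n \ s, p t ∣ B + n ! * t) {q : ℕ} (hq : q.Prime)
    (hqA : q ∣ n ! * ∏ t ∈ range n \ s, p t) {t' : ℕ} (ht' : t' ∈ s) : ¬ q ∣ B + n ! * t' := by
  intro hqB
  rcases hq.dvd_mul.mp hqA with hfac | hprod
  · have hqB' : q ∣ B := (Nat.dvd_add_left (dvd_mul_of_dvd_left hfac t')).mp hqB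
    exact hq.not_dvd_one (((hB1.of_dvd hfac).dvd_iff dvd_rfl).mp hqB')
  · obtain ⟨t, ht, hqt⟩ := (Prime.dvd_finsetProd_iff hq.prime p).mp hprod
    obtain rfl := (Nat.prime_dvd_prime_iff_eq hq (hp t).1).mp hqt
    obtain ⟨htn, hts⟩ := mem_sdiff.mp ht
    have hnq := (hp t).2
    have hmod : n ! * t ≡ n ! * t' [MOD p t] := Nat.ModEq.add_left_cancel' B
      ((Nat.modEq_zero_iff_dvd.mpr (hBp t ht)).trans (Nat.modEq_zero_iff_dvd.mpr hqB).symm)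
    have htt' : t = t' := (hmod.cancel_left_of_coprime
      (hq.coprime_factorial_of_lt hnq).gcd_eq_one).eq_of_lt_of_lt
        (by have := mem_range.mp htn; omega) (by have := mem_range.mp (hs ht'); omega)
    exact hts (htt' ▸ ht')

theorem exists_forall_mul_add_ne_zero_zmod (hs : s ⊆ range n)
    (hp : ∀ t, (p t).Prime ∧ n < p t) (hB1 : B ≡ 1 [MOD n !])
    (hBp : ∀ t ∈ range n \ s, p t ∣ B + n ! * t) (q : ℕ) (hq : q.Prime) :
    ∃ x : ZMod q, ∀ t ∈ s,
      ((n ! * ∏ t ∈ range n \ s, p t : ℕ) : ZMod q) * x + ((B + n ! * t : ℕ) : ZMod q) ≠ 0 := by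
  have := Fact.mk hq
  by_cases hqA : q ∣ n ! * ∏ t ∈ range n \ s, p t
  · refine ⟨0, fun t ht => ?_⟩
    rw [mul_zero, zero_add, Ne, ZMod.natCast_eq_zero_iff]
    exact not_dvd_add_of_dvd_factorial_mul_prod hs hp hB1 hBp hq hqA ht
  · have hnq : n < q := not_le.mp fun hqn => hqA (dvd_mul_of_dvd_left (hq.dvd_factorial.mpr hqn) _)
    refine exists_forall_mul_add_ne_zero s _ _ (fun _ _ => ?_) ?_
    · rwa [Ne, ZMod.natCast_eq_zero_iff]
    · rw [ZMod.card]
      exact ((card_le_card hs).trans (card_range n).le).trans_lt hnq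

end PrescribedPattern

theorem Nat.not_prime_mul_add_of_dvd {p A B m : ℕ} (hp : p.Prime) (hpA : p ∣ A) (hpB : p ∣ B)
    (hA : 0 < A) (hm : 1 < m) : ¬ (A * m + B).Prime := by
  refine Nat.not_prime_of_dvd_of_lt ((hpA.mul_right m).add hpB) hp.two_le ?_
  have := Nat.le_of_dvd hA hpA
  nlinarith

/-- Assuming Dickson's conjecture, every prime pattern is realized along some
arithmetic progression of naturals. -/
theorem arithmetic_progressions_with_prescribed_prime_pattern
    (hD : ∀ (k : ℕ) (a b : ℕ → ℤ), (∀ i < k, 1 ≤ a i) →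
      (¬ ∃ n : ℤ, 1 < n ∧ ∀ s : ℤ, n ∣ ∏ i ∈ Finset.range k, (a i * s + b i)) →
      {m : ℕ | ∀ i < k, Prime (a i * m + b i)}.Infinite) :
    ∀ (n : ℕ) (s : Finset ℕ), s ⊆ Finset.range n →
      ∃ a b : ℕ, 1 ≤ a ∧ ∀ t < n, (Nat.Prime (a * t + b) ↔ t ∈ s) := by
  intro n s hs
  obtain ⟨p, hp_inj, hp⟩ := exists_injective_prime_gt n
  obtain ⟨B, hB1, hBp⟩ := exists_modEq_one_and_dvd_add (range n \ s) hp_inj hp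
  set A := n ! * ∏ t ∈ range n \ s, p t
  have hA : 0 < A := Nat.mul_pos n.factorial_pos (prod_pos fun t _ => (hp t).1.pos)
  have hinf := DicksonConjecture.infinite_setOf_forall_mem_prime hD s
    (fun _ => (A : ℤ)) (fun t => ((B + n ! * t : ℕ) : ℤ)) (fun _ _ => by exact_mod_cast hA)
    fun q hq => by simpa [A] using exists_forall_mul_add_ne_zero_zmod hs hp hB1 hBp q hq
  obtain ⟨m, hprime, hm⟩ := hinf.exists_gt 1
  refine ⟨n !, A * m + B, n.factorial_pos, fun t ht => ⟨fun htp => ?_, fun hts => ?_⟩⟩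
  · by_contra hts
    have htF : t ∈ range n \ s := mem_sdiff.mpr ⟨mem_range.mpr ht, hts⟩
    rw [show n ! * t + (A * m + B) = A * m + (B + n ! * t) by ring] at htp
    exact Nat.not_prime_mul_add_of_dvd (hp t).1 (dvd_mul_of_dvd_right (dvd_prod_of_mem p htF) _)
      (hBp t htF) hA hm htp
  · rw [Nat.prime_iff_prime_int]
    convert hprime t hts using 1
    push_cast
    ring
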